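/- Let G be a non-trivial group, let 𝒞 be a joinable compression family for G, and let H be a normal subgroup of G that is semi-transitive on 𝒞. Then for every A ∈ 𝒞 there exists g ∈ H such that [gᵐAg⁻ᵐ, gⁿAg⁻ⁿ] = {1} for all distinct integers m, n ∈ ℤ. -/

import Mathlib

/-! If some member `D ∈ 𝒞` contains two commuting members `E` and `F`, conjugate `A` into `E`
and choose `g ∈ H` with `gDg⁻¹ ≤ F`. Since `F ≤ D`, every positive power of `g` moves `D`, hence
`A`, into `F`, which centralizes `A`; the corresponding conjugate of `g` works for `A` itself.

Such a `D` always exists. Otherwise take commuting members `P` and `Q = aPa⁻¹` given by (B):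
joinability together with semi-transitivity forces every member of `𝒞` to be `P` or `Q`, and an
element of `P` that is not central in `P` then normalizes every member, contradicting (B)
and (A). -/

namespace Paper

variable {G : Type*} [Group G]

/-- Conjugate of a subgroup: `g A g⁻¹`. -/
def conjS (g : G) (A : Subgroup G) : Subgroup G := A.map (MulAut.conj g).toMonoidHom

/-- The family is invariant under conjugation in `G`. -/
def ConjInvariant (C : Set (Subgroup G)) : Prop := ∀ (g : G), ∀ A ∈ C, conjS g A ∈ C

/-- Condition (A): every member of the family is non-abelian. -/
def CondA (C : Set (Subgroup G)) : Prop :=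
  ∀ A ∈ C, ∃ a ∈ A, ∃ b ∈ A, a * b ≠ b * a

/-- Condition (B): for every nontrivial element `g` of `H` there is a member `A` of the
family with `[A, gAg⁻¹] = 1`. -/
def CondB (C : Set (Subgroup G)) (H : Subgroup G) : Prop :=
  ∀ g ∈ H, g ≠ 1 → ∃ A ∈ C, ⁅A, conjS g A⁆ = (⊥ : Subgroup G)

/-- Condition (C): `H` is semi-transitive on the family. -/
def CondC (C : Set (Subgroup G)) (H : Subgroup G) : Prop :=
  ∀ A ∈ C, ∀ B ∈ C, ∃ g ∈ H, conjS g A ≤ B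

/-- Condition (D): the family is joinable. -/
def CondD (C : Set (Subgroup G)) : Prop :=
  ∀ A ∈ C, ∀ B ∈ C, ∀ C' ∈ C, ⁅A, C'⁆ = (⊥ : Subgroup G) → ¬ C' ≤ B →
    ∃ D ∈ C, A ⊔ B ≤ D

/-- Condition (E): the family is shiftable over `H`: for each `A` in the family there is
`g ∈ H` and a homomorphism from the unrestricted direct product `∏_{i ≥ 1} A` into `H`
restricting to the identity on the first factor, which `g` conjugates by the shift. -/
def CondE (C : Set (Subgroup G)) (H : Subgroup G) : Prop :=
  ∀ A ∈ C, ∃ g ∈ H, ∃ φ : (ℕ → A) →* G,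
    (∀ f : ℕ → A, φ f ∈ H) ∧
    (∀ a : A, φ (fun i => if i = 0 then a else 1) = (a : G)) ∧
    (∀ f : ℕ → A, g * φ f * g⁻¹ = φ (fun i => match i with | 0 => 1 | (n+1) => f n))

/-- Conditions (A)–(C): a compression family for `H`. -/
def IsCompressionFamily (C : Set (Subgroup G)) (H : Subgroup G) : Prop :=
  ConjInvariant C ∧ CondA C ∧ CondB C H ∧ CondC C H

/-- Conditions (A)–(D): a joinable compression family for `H`. -/
def IsJoinableCompressionFamily (C : Set (Subgroup G)) (H : Subgroup G) : Prop :=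
  IsCompressionFamily C H ∧ CondD C

/-- Conditions (A)–(E): a shift-joinable compression family for `H`. -/
def IsShiftJoinableCompressionFamily (C : Set (Subgroup G)) (H : Subgroup G) : Prop :=
  IsJoinableCompressionFamily C H ∧ CondE C H

open scoped Pointwise

lemma conjS_eq_smul (g : G) (A : Subgroup G) : conjS g A = MulAut.conj g • A := rfl

lemma conjS_mul (g h : G) (A : Subgroup G) : conjS (g * h) A = conjS g (conjS h A) := by
  simp only [conjS_eq_smul, map_mul, mul_smul]

lemma conjS_inv_conjS (g : G) (A : Subgroup G) : conjS g⁻¹ (conjS g A) = A := by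
  rw [← conjS_mul, inv_mul_cancel, conjS_eq_smul, map_one, one_smul]

lemma conjS_le_conjS_iff {g : G} {A B : Subgroup G} : conjS g A ≤ conjS g B ↔ A ≤ B :=
  Subgroup.pointwise_smul_le_pointwise_smul_iff (a := MulAut.conj g)

lemma conjS_injective (g : G) : Function.Injective (conjS g) := fun _ _ h =>
  le_antisymm (conjS_le_conjS_iff.1 h.le) (conjS_le_conjS_iff.1 h.ge)

lemma conjS_bot (g : G) : conjS g (⊥ : Subgroup G) = ⊥ :=
  Subgroup.smul_bot (MulAut.conj g)

lemma commutator_conjS (g : G) (A B : Subgroup G) :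
    ⁅conjS g A, conjS g B⁆ = conjS g ⁅A, B⁆ :=
  (Subgroup.map_commutator A B _).symm

lemma conjS_eq_self_of_mem {a : G} {A : Subgroup G} (ha : a ∈ A) : conjS a A = A :=
  Subgroup.conj_smul_eq_self_of_mem ha

lemma conjS_le_self_of_mem_centralizer {a : G} {A : Subgroup G}
    (ha : a ∈ Subgroup.centralizer A) : conjS a A ≤ A := by
  rintro - ⟨x, hx, rfl⟩
  simpa [MulAut.conj_apply, ← Subgroup.mem_centralizer_iff.1 ha x hx] using hx

lemma conjS_eq_self_of_mem_centralizer {a : G} {A : Subgroup G}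
    (ha : a ∈ Subgroup.centralizer A) : conjS a A = A := by
  refine le_antisymm (conjS_le_self_of_mem_centralizer ha) ?_
  rw [conjS_eq_smul, Subgroup.subset_pointwise_smul_iff, ← map_inv]
  exact conjS_le_self_of_mem_centralizer (inv_mem ha)

def IsShifting (g : G) (A : Subgroup G) : Prop :=
  ∀ m n : ℤ, m ≠ n → ⁅conjS (g ^ m) A, conjS (g ^ n) A⁆ = ⊥

lemma IsShifting.conj {g : G} {A : Subgroup G} (h : IsShifting g A) (t : G) :
    IsShifting (t * g * t⁻¹) (conjS t A) := by
  intro m n hmn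
  have hpow (k : ℤ) : conjS ((t * g * t⁻¹) ^ k) (conjS t A) = conjS t (conjS (g ^ k) A) := by
    rw [conj_zpow, ← conjS_mul, ← conjS_mul, inv_mul_cancel_right]
  rw [hpow, hpow, commutator_conjS, h m n hmn, conjS_bot]

lemma isShifting_of_forall_commutator_conjS_pow_eq_bot {g : G} {A : Subgroup G}
    (h : ∀ k : ℕ, ⁅A, conjS (g ^ (k + 1)) A⁆ = ⊥) : IsShifting g A := by
  suffices key : ∀ m n : ℤ, m < n → ⁅conjS (g ^ m) A, conjS (g ^ n) A⁆ = ⊥ by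
    intro m n hmn
    rcases hmn.lt_or_gt with hlt | hgt
    · exact key m n hlt
    · rw [Subgroup.commutator_comm]
      exact key n m hgt
  intro m n hmn
  obtain ⟨k, rfl⟩ : ∃ k : ℕ, n = m + (k + 1) := ⟨(n - m - 1).toNat, by omega⟩
  rw [zpow_add, conjS_mul, commutator_conjS, ← Nat.cast_succ, zpow_natCast, h, conjS_bot]

lemma isShifting_of_conjS_le {g : G} {A D F : Subgroup G} (hAD : A ≤ D) (hFD : F ≤ D)
    (hgD : conjS g D ≤ F) (hAF : ⁅A, F⁆ = ⊥) : IsShifting g A := by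
  have hpow (k : ℕ) : conjS (g ^ (k + 1)) D ≤ F := by
    induction k with
    | zero => simpa using hgD
    | succ k ih =>
      rw [pow_succ', conjS_mul]
      exact (conjS_le_conjS_iff.2 (ih.trans hFD)).trans hgD
  refine isShifting_of_forall_commutator_conjS_pow_eq_bot fun k => eq_bot_iff.2 ?_
  calc ⁅A, conjS (g ^ (k + 1)) A⁆ ≤ ⁅A, F⁆ :=
        Subgroup.commutator_mono le_rfl ((conjS_le_conjS_iff.2 hAD).trans (hpow k))
    _ = ⊥ := hAF

def HasCommutingPairBelow (C : Set (Subgroup G)) (D : Subgroup G) : Prop :=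
  ∃ E ∈ C, ∃ F ∈ C, E ≤ D ∧ F ≤ D ∧ ⁅E, F⁆ = ⊥

lemma exists_isShifting_of_hasCommutingPairBelow {C : Set (Subgroup G)} {H : Subgroup G}
    (htrans : CondC C ⊤) (hN : H.Normal) (hsemi : CondC C H) {A D : Subgroup G} (hA : A ∈ C)
    (hD : D ∈ C) (hpair : HasCommutingPairBelow C D) : ∃ g ∈ H, IsShifting g A := by
  obtain ⟨E, hE, F, hF, hED, hFD, hEF⟩ := hpair
  obtain ⟨t, -, htA⟩ := htrans A hA E hE
  obtain ⟨g, hgH, hgD⟩ := hsemi D hD F hF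
  have hshift : IsShifting g (conjS t A) := isShifting_of_conjS_le (htA.trans hED) hFD hgD
    (eq_bot_iff.2 ((Subgroup.commutator_mono htA le_rfl).trans hEF.le))
  refine ⟨t⁻¹ * g * t⁻¹⁻¹, hN.conj_mem g hgH t⁻¹, ?_⟩
  rw [← conjS_inv_conjS t A]
  exact hshift.conj t⁻¹

lemma eq_of_le_of_commutator_eq_bot {C : Set (Subgroup G)}
    (hno : ∀ D ∈ C, ¬ HasCommutingPairBelow C D) (hjoin : CondD C) {P Q M : Subgroup G}
    (hP : P ∈ C) (hQ : Q ∈ C) (hPQ : ⁅P, Q⁆ = ⊥) (hM : M ∈ C) (hMQ : M ≤ Q) :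
    M = Q := by
  by_contra hne
  obtain ⟨D, hD, hPMD⟩ := hjoin P hP M hM Q hQ hPQ fun hQM => hne (le_antisymm hMQ hQM)
  exact hno D hD ⟨P, hP, M, hM, le_sup_left.trans hPMD, le_sup_right.trans hPMD,
    eq_bot_iff.2 ((Subgroup.commutator_mono le_rfl hMQ).trans hPQ.le)⟩

lemma eq_of_ge_of_commutator_eq_bot {C : Set (Subgroup G)}
    (hno : ∀ D ∈ C, ¬ HasCommutingPairBelow C D) (hinv : ConjInvariant C)
    (htrans : CondC C ⊤) (hjoin : CondD C) {P Q M : Subgroup G} (hP : P ∈ C) (hQ : Q ∈ C)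
    (hPQ : ⁅P, Q⁆ = ⊥) (hM : M ∈ C) (hQM : Q ≤ M) : M = Q := by
  obtain ⟨u, -, huMQ⟩ := htrans M hM Q hQ
  have huM : conjS u M = Q :=
    eq_of_le_of_commutator_eq_bot hno hjoin hP hQ hPQ (hinv u M hM) huMQ
  have huQ : conjS u Q = Q := eq_of_le_of_commutator_eq_bot hno hjoin hP hQ hPQ (hinv u Q hQ)
    ((conjS_le_conjS_iff.2 hQM).trans huM.le)
  exact conjS_injective u (huM.trans huQ.symm)

lemma eq_or_eq_of_commutator_eq_bot {C : Set (Subgroup G)}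
    (hno : ∀ D ∈ C, ¬ HasCommutingPairBelow C D) (hinv : ConjInvariant C)
    (htrans : CondC C ⊤) (hjoin : CondD C) {P Q : Subgroup G} (hP : P ∈ C) (hQ : Q ∈ C)
    (hPQ : ⁅P, Q⁆ = ⊥) {B : Subgroup G} (hB : B ∈ C) : B = P ∨ B = Q := by
  by_cases hQB : Q ≤ B
  · exact .inr (eq_of_ge_of_commutator_eq_bot hno hinv htrans hjoin hP hQ hPQ hB hQB)
  have hQP : ⁅Q, P⁆ = ⊥ := Subgroup.commutator_comm Q P ▸ hPQ
  obtain ⟨D, hD, hPBD⟩ := hjoin P hP B hB Q hQ hPQ hQB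
  have hDP : D = P :=
    eq_of_ge_of_commutator_eq_bot hno hinv htrans hjoin hQ hP hQP hD (le_sup_left.trans hPBD)
  exact .inl <|
    eq_of_le_of_commutator_eq_bot hno hjoin hQ hP hQP hB (hDP ▸ le_sup_right.trans hPBD)

lemma CondA.commutator_self_ne_bot {C : Set (Subgroup G)} (hnab : CondA C) {F : Subgroup G}
    (hF : F ∈ C) : ⁅F, F⁆ ≠ ⊥ := fun h => by
  obtain ⟨a, ha, b, hb, hab⟩ := hnab F hF
  exact hab <|
    Subgroup.mem_centralizer_iff.1 (Subgroup.commutator_eq_bot_iff_le_centralizer.1 h hb) a ha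

lemma not_forall_eq_or_eq_of_commutator_eq_bot {C : Set (Subgroup G)} (hnab : CondA C)
    (hsep : CondB C ⊤) {P Q : Subgroup G} (hP : P ∈ C) (hPQ : ⁅P, Q⁆ = ⊥) :
    ¬ ∀ B ∈ C, B = P ∨ B = Q := fun hall => by
  obtain ⟨a, ha, b, -, hab⟩ := hnab P hP
  obtain ⟨F, hF, hFa⟩ := hsep a trivial (by rintro rfl; simp at hab)
  have haF : conjS a F = F := by
    rcases hall F hF with rfl | rfl
    · exact conjS_eq_self_of_mem ha
    · exact conjS_eq_self_of_mem_centralizer <|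
        Subgroup.commutator_eq_bot_iff_le_centralizer.1 hPQ ha
  rw [haF] at hFa
  exact hnab.commutator_self_ne_bot hF hFa

lemma exists_hasCommutingPairBelow {C : Set (Subgroup G)} (hC : IsJoinableCompressionFamily C ⊤)
    {A : Subgroup G} (hA : A ∈ C) : ∃ D ∈ C, HasCommutingPairBelow C D := by
  obtain ⟨⟨hinv, hnab, hsep, htrans⟩, hjoin⟩ := hC
  by_contra! hno
  obtain ⟨a, -, b, -, hab⟩ := hnab A hA
  obtain ⟨P, hP, hPQ⟩ := hsep a trivial (by rintro rfl; simp at hab)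
  exact not_forall_eq_or_eq_of_commutator_eq_bot hnab hsep hP hPQ fun B hB =>
    eq_or_eq_of_commutator_eq_bot hno hinv htrans hjoin hP (hinv a P hP) hPQ hB

theorem exists_shifting_element_general (C : Set (Subgroup G))
    (hC : IsJoinableCompressionFamily C (⊤ : Subgroup G))
    (H : Subgroup G) (hN : H.Normal) (hsemi : CondC C H) :
    ∀ A ∈ C, ∃ g ∈ H, ∀ m n : ℤ, m ≠ n →
      ⁅conjS (g ^ m) A, conjS (g ^ n) A⁆ = (⊥ : Subgroup G) := by
  intro A hA
  obtain ⟨D, hD, hpair⟩ := exists_hasCommutingPairBelow hC hA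
  exact exists_isShifting_of_hasCommutingPairBelow hC.1.2.2.2 hN hsemi hA hD hpair

/-- Lemma (leafless, part (ii)): if 𝒞 is a joinable compression family for `G` and `H` is
a normal subgroup of `G` that is semi-transitive on 𝒞, then for every `A ∈ 𝒞` there is
`g ∈ H` such that the conjugates `gⁿAg⁻ⁿ` (for `n ∈ ℤ`) pairwise commute. -/
theorem exists_shifting_element [Nontrivial G] (C : Set (Subgroup G))
    (hC : IsJoinableCompressionFamily C (⊤ : Subgroup G))
    (H : Subgroup G) (hN : H.Normal) (hsemi : CondC C H) :
    ∀ A ∈ C, ∃ g ∈ H, ∀ m n : ℤ, m ≠ n →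
      ⁅conjS (g ^ m) A, conjS (g ^ n) A⁆ = (⊥ : Subgroup G) :=
  exists_shifting_element_general C hC H hN hsemi

end Paper
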